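/- Let N_1 and N_2 be Bruck-replaceable nests of reguli in a regular spread S of PG(3,q) such that N_1 and N_2 share no lines except those on exactly one common regulus R. Then N = (N_1 ∪ N_2) \ {R} is a nest (every covered line lies on exactly two of its reguli). -/

import Mathlib

open Finset

/-- A nest of reguli: every line covered by some regulus of `N` lies in exactly two
reguli of `N`.  Lines are finite sets of points, reguli are finite sets of lines. -/
def IsNest {P : Type*} [DecidableEq P] (N : Finset (Finset (Finset P))) : Prop :=
  ∀ ℓ : Finset P, (∃ Rg ∈ N, ℓ ∈ Rg) → (N.filter (fun Rg => ℓ ∈ Rg)).card = 2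

/-- The orbit of a line `ℓ` under the permutation `ψ` of the points, truncated at length `n`. -/
def lineOrbit {P : Type*} [DecidableEq P] (ψ : Equiv.Perm P) (n : ℕ) (ℓ : Finset P) :
    Finset (Finset P) :=
  (Finset.range n).image fun k => ℓ.image ⇑(ψ ^ k)

/-- `H` is a Bruck hemi-replacement of the nest `N`: for each regulus `Rg` of `N` it selects
half of the opposite regulus `opp Rg`, which is an orbit under `ψ` (the square of a Bruck
kernel generator), and all selected lines are pairwise disjoint. -/
def IsBruckHemiReplacement {P : Type*} [DecidableEq P] (q : ℕ) (ψ : Equiv.Perm P)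
    (opp : Finset (Finset P) → Finset (Finset P))
    (N : Finset (Finset (Finset P))) (H : Finset (Finset P) → Finset (Finset P)) : Prop :=
  (∀ Rg ∈ N, H Rg ⊆ opp Rg ∧ (H Rg).card = (q + 1) / 2 ∧
      ∃ ℓ ∈ opp Rg, H Rg = lineOrbit ψ ((q + 1) / 2) ℓ) ∧
  (∀ Rg ∈ N, ∀ Rg' ∈ N, ∀ x ∈ H Rg, ∀ y ∈ H Rg', x ≠ y → Disjoint x y)

/-- A nest is Bruck-replaceable if it admits a Bruck hemi-replacement. -/
def BruckReplaceable {P : Type*} [DecidableEq P] (q : ℕ) (ψ : Equiv.Perm P)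
    (opp : Finset (Finset P) → Finset (Finset P))
    (N : Finset (Finset (Finset P))) : Prop :=
  ∃ H, IsBruckHemiReplacement q ψ opp N H

/-!
A line on the common regulus `R` lies on two reguli of each nest, one of them `R` itself, so it
lies on `2 + 2 - 2 = 2` reguli of `(N₁ ∪ N₂) \ {R}`. A line off `R` is covered by only one of
the two nests, and the reguli through it are exactly those of that nest.
-/

theorem Finset.card_erase_union_of_inter_eq_singleton {α : Type*} [DecidableEq α]
    {s t : Finset α} {r : α} (h : s ∩ t = {r}) :
    ((s ∪ t).erase r).card = s.card + t.card - 2 := by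
  have hr : r ∈ s ∪ t := mem_union_left _ (mem_of_mem_inter_left (h ▸ mem_singleton_self r))
  have hcard := card_union_add_card_inter s t
  rw [h, card_singleton] at hcard
  rw [card_erase_of_mem hr]
  omega

section TwoNests

variable {P : Type*} [DecidableEq P] {N₁ N₂ : Finset (Finset (Finset P))}
  {R : Finset (Finset P)} {ℓ : Finset P}

theorem card_filter_erase_union_of_mem (hmeet : N₁ ∩ N₂ = {R}) (hℓR : ℓ ∈ R) :
    (((N₁ ∪ N₂).erase R).filter (ℓ ∈ ·)).card =
      (N₁.filter (ℓ ∈ ·)).card + (N₂.filter (ℓ ∈ ·)).card - 2 := by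
  rw [filter_erase, filter_union]
  apply card_erase_union_of_inter_eq_singleton
  rw [← filter_inter_distrib, hmeet, filter_singleton, if_pos hℓR]

theorem filter_erase_union_eq_left (hℓR : ℓ ∉ R) (hℓ₂ : ∀ B ∈ N₂, ℓ ∉ B) :
    ((N₁ ∪ N₂).erase R).filter (ℓ ∈ ·) = N₁.filter (ℓ ∈ ·) := by
  ext A
  simp only [mem_filter, mem_erase, mem_union]
  constructor
  · rintro ⟨⟨-, hA₁ | hA₂⟩, hℓA⟩
    · exact ⟨hA₁, hℓA⟩
    · exact absurd hℓA (hℓ₂ A hA₂)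
  · rintro ⟨hA₁, hℓA⟩
    exact ⟨⟨fun hAR => hℓR (hAR ▸ hℓA), Or.inl hA₁⟩, hℓA⟩

end TwoNests

theorem stmt_1_general {P : Type*} [DecidableEq P]
    (N₁ N₂ : Finset (Finset (Finset P)))
    (hN₁ : IsNest N₁) (hN₂ : IsNest N₂)
    (R : Finset (Finset P))
    -- `R` is the unique common regulus of `N₁` and `N₂`
    (hmeet : N₁ ∩ N₂ = {R})
    -- the nests share no lines except those on `R`
    (hshare : ∀ ℓ : Finset P, (∃ A ∈ N₁, ℓ ∈ A) → (∃ B ∈ N₂, ℓ ∈ B) → ℓ ∈ R) :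
    IsNest ((N₁ ∪ N₂).erase R) := by
  have hR : R ∈ N₁ ∩ N₂ := hmeet ▸ mem_singleton_self R
  intro ℓ hℓ
  by_cases hℓR : ℓ ∈ R
  · rw [card_filter_erase_union_of_mem hmeet hℓR, hN₁ ℓ ⟨R, mem_of_mem_inter_left hR, hℓR⟩,
      hN₂ ℓ ⟨R, mem_of_mem_inter_right hR, hℓR⟩]
  obtain ⟨A, hA, hℓA⟩ := hℓ
  rcases mem_union.mp (mem_of_mem_erase hA) with hA₁ | hA₂
  · rw [filter_erase_union_eq_left hℓR fun B hB hℓB => hℓR (hshare ℓ ⟨A, hA₁, hℓA⟩ ⟨B, hB, hℓB⟩)]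
    exact hN₁ ℓ ⟨A, hA₁, hℓA⟩
  · rw [union_comm,
      filter_erase_union_eq_left hℓR fun B hB hℓB => hℓR (hshare ℓ ⟨B, hB, hℓB⟩ ⟨A, hA₂, hℓA⟩)]
    exact hN₂ ℓ ⟨A, hA₂, hℓA⟩

/-- If `N₁`, `N₂` are Bruck-replaceable nests in a regular spread of `PG(3,q)`
sharing no lines except those on exactly one common regulus `R`, then
`N = (N₁ ∪ N₂) \ {R}` is a nest. -/
theorem stmt_1 {P : Type*} [DecidableEq P] (q : ℕ) (hq : Odd q)
    (ψ : Equiv.Perm P) (opp : Finset (Finset P) → Finset (Finset P))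
    (N₁ N₂ : Finset (Finset (Finset P)))
    (hN₁ : IsNest N₁) (hN₂ : IsNest N₂)
    (hBr₁ : BruckReplaceable q ψ opp N₁) (hBr₂ : BruckReplaceable q ψ opp N₂)
    (R : Finset (Finset P))
    -- `R` is the unique common regulus of `N₁` and `N₂`
    (hmeet : N₁ ∩ N₂ = {R})
    -- the nests share no lines except those on `R`
    (hshare : ∀ ℓ : Finset P, (∃ A ∈ N₁, ℓ ∈ A) → (∃ B ∈ N₂, ℓ ∈ B) → ℓ ∈ R) :
    IsNest ((N₁ ∪ N₂).erase R) :=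
  stmt_1_general N₁ N₂ hN₁ hN₂ R hmeet hshare
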